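/- For the PCTL smoother of the 3T system, the matrix H := (M + Mᵀ − A)⁻¹ MᵀD⁻¹M factors as H = H₁H₂ and satisfies λ_max(H) ≤ ‖H₁‖_∞ ‖H₂‖_∞ ≤ 4; consequently the post-smoothing operator G₂ = I − M⁻¹A satisfies ‖G₂e‖_A² ≤ ‖e‖_A² − (1/4)(D⁻¹Ae, Ae) for all e. -/

import Mathlib

/-!
In block form `M + Mᵀ - A = diag(A_r, A_i, A_e)`, `Mᵀ = diag(A_r, A_i, A_e) H₁` and
`D⁻¹M = H₂`, which gives the factorization. A row of `H₁` is a unit vector plus a row of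
`A_r⁻¹|D_er|` (or `A_i⁻¹|D_ei|`); as `A_r⁻¹ ≥ 0` and, `A_r` being a Z-matrix, diagonal dominance
gives `|D_er| 𝟙 ≤ A_r 𝟙`, it sums to at most `2`. The rows of `H₂ = D⁻¹M` are dominated by those
of `D⁻¹A`, which sum to at most `2`. The eigenvalue bound is submultiplicativity of the
`∞`-operator norm.

For the smoother, `w = M⁻¹Ae` gives `‖(I - M⁻¹A)e‖_A² = ‖e‖_A² - wᵀ(M + Mᵀ - A)w` and `Mw = Ae`,
so it suffices that `MᵀD⁻¹M ≤ 4 (M + Mᵀ - A)`. Block by block this follows from `B D_B⁻¹ B ≤ 2B`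
for diagonally dominant positive semidefinite `B` (Cauchy–Schwarz); the coupling terms
`D_er x + D_ei y` of the last block row are absorbed by the dominance margins `|D_er|`, `|D_ei|`
of `A_r`, `A_i` and `|D_er| + |D_ei|` of `A_e`.
-/

open Matrix Finset

lemma add_sq_div_le_of_abs_add_abs_le {a b c u v t : ℝ} (hc : 0 < c) (h : |a| + |b| ≤ c) :
    (a * u + b * v + t) ^ 2 / c ≤ 2 * (|a| * u ^ 2 + |b| * v ^ 2) + 2 * (t ^ 2 / c) := by
  have hcs : (a * u + b * v) ^ 2 ≤ (|a| + |b|) * (|a| * u ^ 2 + |b| * v ^ 2) := by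
    nlinarith [sq_nonneg (u - v), sq_nonneg (u + v), abs_mul_abs_self a, abs_mul_abs_self b,
      le_abs_self (a * b), neg_abs_le (a * b), abs_mul a b]
  have hR : 0 ≤ |a| * u ^ 2 + |b| * v ^ 2 := by positivity
  rw [div_le_iff₀ hc, add_mul, mul_assoc 2 (t ^ 2 / c), div_mul_cancel₀ _ hc.ne']
  nlinarith [sq_nonneg (a * u + b * v - t), mul_le_mul_of_nonneg_right h hR]

namespace Matrix

variable {m : Type*}

lemma IsHermitian.isSymm {B : Matrix m m ℝ} (hB : B.IsHermitian) : B.IsSymm :=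
  isHermitian_iff_isSymm.mp hB

variable [Fintype m]

lemma PosSemidef.dotProduct_mulVec_sq_le {B : Matrix m m ℝ} (hB : B.PosSemidef) (x y : m → ℝ) :
    (x ⬝ᵥ B *ᵥ y) ^ 2 ≤ (x ⬝ᵥ B *ᵥ x) * (y ⬝ᵥ B *ᵥ y) := by
  let _ := B.toSeminormedAddCommGroup hB
  let _ := B.toInnerProductSpace hB
  have h := real_inner_mul_inner_self_le x y
  change (B *ᵥ y) ⬝ᵥ star x * ((B *ᵥ y) ⬝ᵥ star x)
    ≤ (B *ᵥ x) ⬝ᵥ star x * ((B *ᵥ y) ⬝ᵥ star y) at h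
  simpa only [star_trivial, dotProduct_comm _ x, dotProduct_comm _ y, sq] using h

lemma PosDef.isUnit_det [DecidableEq m] {B : Matrix m m ℝ} (hB : B.PosDef) : IsUnit B.det :=
  hB.det_pos.ne'.isUnit

variable [DecidableEq m]

lemma IsSymm.sum_erase_abs_mul_sq_comm {B : Matrix m m ℝ} (hB : B.IsSymm) (x : m → ℝ) :
    ∑ k, ∑ j ∈ univ.erase k, |B k j| * x j ^ 2 = ∑ k, (∑ j ∈ univ.erase k, |B k j|) * x k ^ 2 := by
  rw [sum_comm' (t' := univ) (s' := fun j => univ.erase j) (by simp [and_comm, eq_comm])]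
  simp only [sum_mul, hB.apply]

lemma IsSymm.abs_dotProduct_mulVec_self_sub_sum_diag_le {B : Matrix m m ℝ} (hB : B.IsSymm)
    (x : m → ℝ) :
    |x ⬝ᵥ B *ᵥ x - ∑ k, B k k * x k ^ 2| ≤ ∑ k, (∑ j ∈ univ.erase k, |B k j|) * x k ^ 2 := by
  have hoff : x ⬝ᵥ B *ᵥ x - ∑ k, B k k * x k ^ 2
      = ∑ k, ∑ j ∈ univ.erase k, B k j * (x k * x j) := by
    simp only [dotProduct, mulVec, ← sum_sub_distrib, mul_sum]
    refine sum_congr rfl fun k _ => ?_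
    rw [← add_sum_erase _ _ (mem_univ k)]
    simp only [sq]
    rw [add_sub_right_comm, show x k * (B k k * x k) - B k k * (x k * x k) = 0 by ring, zero_add]
    exact sum_congr rfl fun j _ => by ring
  have hamgm : ∀ k j, |B k j * (x k * x j)| ≤ (|B k j| * x k ^ 2 + |B k j| * x j ^ 2) / 2 := by
    intro k j
    rw [abs_mul, abs_mul]
    nlinarith [abs_nonneg (B k j), mul_nonneg (abs_nonneg (B k j)) (sq_nonneg (|x k| - |x j|)),
      sq_abs (x k), sq_abs (x j)]
  rw [hoff]
  calc |∑ k, ∑ j ∈ univ.erase k, B k j * (x k * x j)|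
      ≤ ∑ k, ∑ j ∈ univ.erase k, (|B k j| * x k ^ 2 + |B k j| * x j ^ 2) / 2 :=
        (abs_sum_le_sum_abs _ _).trans <| sum_le_sum fun k _ =>
          (abs_sum_le_sum_abs _ _).trans <| sum_le_sum fun j _ => hamgm k j
    _ = ∑ k, (∑ j ∈ univ.erase k, |B k j|) * x k ^ 2 := by
        simp only [← sum_div, sum_add_distrib, hB.sum_erase_abs_mul_sq_comm, ← sum_mul]
        ring

lemma IsSymm.dotProduct_mulVec_self_le_two_mul_sum_diag {B : Matrix m m ℝ} (hB : B.IsSymm)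
    (hdom : ∀ k, ∑ j ∈ univ.erase k, |B k j| ≤ B k k) (x : m → ℝ) :
    x ⬝ᵥ B *ᵥ x ≤ 2 * ∑ k, B k k * x k ^ 2 := by
  have hoff := (abs_le.mp (hB.abs_dotProduct_mulVec_self_sub_sum_diag_le x)).2
  have : ∑ k, (∑ j ∈ univ.erase k, |B k j|) * x k ^ 2 ≤ ∑ k, B k k * x k ^ 2 :=
    sum_le_sum fun k _ => mul_le_mul_of_nonneg_right (hdom k) (sq_nonneg _)
  linarith

lemma IsSymm.sum_abs_mul_sq_le_dotProduct_mulVec_self {B : Matrix m m ℝ} (hB : B.IsSymm)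
    {d : m → ℝ} (hdom : ∀ k, |d k| + ∑ j ∈ univ.erase k, |B k j| ≤ B k k) (x : m → ℝ) :
    ∑ k, |d k| * x k ^ 2 ≤ x ⬝ᵥ B *ᵥ x := by
  have hoff := (abs_le.mp (hB.abs_dotProduct_mulVec_self_sub_sum_diag_le x)).1
  have : ∑ k, |d k| * x k ^ 2 + ∑ k, (∑ j ∈ univ.erase k, |B k j|) * x k ^ 2
      ≤ ∑ k, B k k * x k ^ 2 := by
    rw [← sum_add_distrib]
    exact sum_le_sum fun k _ => by
      rw [← add_mul]; exact mul_le_mul_of_nonneg_right (hdom k) (sq_nonneg _)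
  linarith

lemma PosSemidef.sum_sq_mulVec_div_diag_le {B : Matrix m m ℝ} (hB : B.PosSemidef)
    (hdom : ∀ k, ∑ j ∈ univ.erase k, |B k j| ≤ B k k) (x : m → ℝ) :
    ∑ k, (B *ᵥ x) k ^ 2 / B k k ≤ 2 * (x ⬝ᵥ B *ᵥ x) := by
  -- Cauchy–Schwarz for `q = D⁻¹ B x`, where `qᵀ B x = T` and `qᵀ B q ≤ 2 qᵀ D q = 2 T`
  set q : m → ℝ := fun k => (B *ᵥ x) k / B k k
  set T := ∑ k, (B *ᵥ x) k ^ 2 / B k k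
  have hqx : q ⬝ᵥ B *ᵥ x = T := sum_congr rfl fun k _ => by simp only [q]; ring
  have hqq : q ⬝ᵥ B *ᵥ q ≤ 2 * T := by
    refine (hB.isHermitian.isSymm.dotProduct_mulVec_self_le_two_mul_sum_diag hdom q).trans_eq ?_
    congr 1
    refine sum_congr rfl fun k _ => ?_
    simp only [q]
    rcases eq_or_ne (B k k) 0 with h | h
    · simp [h]
    · field_simp
  have hcs := hB.dotProduct_mulVec_sq_le q x
  rw [hqx] at hcs
  have hx : 0 ≤ x ⬝ᵥ B *ᵥ x := by simpa using hB.dotProduct_mulVec_nonneg x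
  nlinarith [mul_le_mul_of_nonneg_right hqq hx]

lemma inv_diagonal_of_ne_zero {v : m → ℝ} (hv : ∀ k, v k ≠ 0) :
    (diagonal v)⁻¹ = diagonal fun k => (v k)⁻¹ :=
  inv_eq_right_inv <| by simp [diagonal_mul_diagonal, hv]

lemma inv_diagonal_mulVec_dotProduct_self {d : m → ℝ} (hd : ∀ k, d k ≠ 0) (v : m → ℝ) :
    ((diagonal d)⁻¹ *ᵥ v) ⬝ᵥ v = ∑ k, v k ^ 2 / d k := by
  simp only [inv_diagonal_of_ne_zero hd, dotProduct, mulVec_diagonal]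
  exact sum_congr rfl fun k _ => by ring

lemma sum_abs_diagonal_inv_mul_le_two {A N : Matrix m m ℝ} (hpos : ∀ k, 0 < A k k)
    (hdom : ∀ k, ∑ j ∈ univ.erase k, |A k j| ≤ A k k) (hN : ∀ k j, |N k j| ≤ |A k j|) (k : m) :
    ∑ j, |((diagonal fun i => A i i)⁻¹ * N) k j| ≤ 2 := by
  rw [inv_diagonal_of_ne_zero fun i => (hpos i).ne']
  simp only [diagonal_mul, abs_mul, ← mul_sum, abs_inv, abs_of_pos (hpos k)]
  rw [inv_mul_le_iff₀ (hpos k)]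
  calc ∑ j, |N k j| ≤ ∑ j, |A k j| := sum_le_sum fun j _ => hN k j
    _ = |A k k| + ∑ j ∈ univ.erase k, |A k j| := (add_sum_erase _ _ (mem_univ k)).symm
    _ ≤ A k k * 2 := by rw [abs_of_pos (hpos k)]; linarith [hdom k]

lemma abs_le_sum_row_of_offDiag_nonpos {B : Matrix m m ℝ} (hZ : ∀ k j, k ≠ j → B k j ≤ 0)
    {d : m → ℝ} (hdom : ∀ k, |d k| + ∑ j ∈ univ.erase k, |B k j| ≤ B k k) (k : m) :
    |d k| ≤ ∑ j, B k j := by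
  have hoff : ∑ j ∈ univ.erase k, B k j = -∑ j ∈ univ.erase k, |B k j| := by
    rw [← sum_neg_distrib]
    exact sum_congr rfl fun j hj => by
      rw [abs_of_nonpos (hZ k j (ne_of_mem_erase hj).symm), neg_neg]
  rw [← add_sum_erase _ _ (mem_univ k), hoff]
  linarith [hdom k]

lemma sum_abs_inv_mul_diagonal_le_one {B : Matrix m m ℝ} (hB : IsUnit B.det)
    (hinv : ∀ k j, 0 ≤ B⁻¹ k j) {d : m → ℝ} (hd : ∀ k, |d k| ≤ ∑ j, B k j) (k : m) :
    ∑ j, |(B⁻¹ * diagonal d) k j| ≤ 1 :=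
  calc ∑ j, |(B⁻¹ * diagonal d) k j| = ∑ j, B⁻¹ k j * |d j| := by
        simp only [mul_diagonal, abs_mul, abs_of_nonneg (hinv _ _)]
    _ ≤ ∑ j, B⁻¹ k j * (B *ᵥ 1) j := sum_le_sum fun j _ =>
        mul_le_mul_of_nonneg_left ((hd j).trans_eq (by simp [mulVec, dotProduct])) (hinv k j)
    _ = (B⁻¹ *ᵥ (B *ᵥ 1)) k := rfl
    _ = 1 := by rw [mulVec_mulVec, nonsing_inv_mul _ hB, one_mulVec, Pi.one_apply]

section linfty
attribute [local instance] Matrix.linftyOpNormedAddCommGroup Matrix.linftyOpNormedRing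
  Matrix.linftyOpNormedAlgebra

lemma linfty_opNorm_le_iSup_sum_abs (B : Matrix m m ℝ) : ‖B‖ ≤ ⨆ k, ∑ j, |B k j| := by
  have h0 : 0 ≤ ⨆ k, ∑ j, |B k j| := Real.iSup_nonneg fun k => sum_nonneg fun j _ => abs_nonneg _
  rw [linfty_opNorm_def, ← Real.le_toNNReal_iff_coe_le h0]
  refine Finset.sup_le fun k _ => (Real.le_toNNReal_iff_coe_le h0).2 ?_
  push_cast
  exact le_ciSup (f := fun k => ∑ j, |B k j|) (Set.finite_range _).bddAbove k

lemma le_iSup_sum_abs_mul_of_mem_spectrum_mul (P Q : Matrix m m ℝ) {μ : ℝ}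
    (hμ : μ ∈ spectrum ℝ (P * Q)) : μ ≤ (⨆ k, ∑ j, |P k j|) * ⨆ k, ∑ j, |Q k j| := by
  cases isEmpty_or_nonempty m
  · simp [spectrum.of_subsingleton] at hμ
  calc μ ≤ ‖P * Q‖ := (le_abs_self μ).trans (spectrum.norm_le_norm_of_mem hμ)
    _ ≤ ‖P‖ * ‖Q‖ := norm_mul_le P Q
    _ ≤ _ := mul_le_mul (linfty_opNorm_le_iSup_sum_abs P) (linfty_opNorm_le_iSup_sum_abs Q)
        (norm_nonneg Q) (Real.iSup_nonneg fun k => sum_nonneg fun j _ => abs_nonneg _)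

end linfty

lemma dotProduct_mulVec_one_sub_inv_mul {A M : Matrix m m ℝ} (hA : A.IsSymm) (hM : IsUnit M.det)
    (e : m → ℝ) :
    ((1 - M⁻¹ * A) *ᵥ e) ⬝ᵥ A *ᵥ ((1 - M⁻¹ * A) *ᵥ e)
      = e ⬝ᵥ A *ᵥ e - (M⁻¹ *ᵥ A *ᵥ e) ⬝ᵥ (M + Mᵀ - A) *ᵥ (M⁻¹ *ᵥ A *ᵥ e) := by
  set w := M⁻¹ *ᵥ A *ᵥ e
  have hMw : M *ᵥ w = A *ᵥ e := by rw [mulVec_mulVec, mul_nonsing_inv _ hM, one_mulVec]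
  have hsymm : e ⬝ᵥ A *ᵥ w = w ⬝ᵥ A *ᵥ e := by
    rw [dotProduct_mulVec, ← hA.eq, vecMul_transpose, dotProduct_comm, hA.eq]
  have hMt : w ⬝ᵥ Mᵀ *ᵥ w = w ⬝ᵥ M *ᵥ w := by
    rw [dotProduct_mulVec, vecMul_transpose, dotProduct_comm]
  have hG : (1 - M⁻¹ * A) *ᵥ e = e - w := by rw [sub_mulVec, one_mulVec, ← mulVec_mulVec]
  rw [hG, sub_mulVec, add_mulVec, mulVec_sub]
  simp only [dotProduct_sub, sub_dotProduct, dotProduct_add, hMt, hMw, hsymm]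
  ring

lemma dotProduct_mulVec_one_sub_inv_mul_le {A M W : Matrix m m ℝ} (hA : A.IsSymm)
    (hM : IsUnit M.det) {c : ℝ} (hc : 0 < c)
    (hW : ∀ w, (W *ᵥ M *ᵥ w) ⬝ᵥ M *ᵥ w ≤ c * (w ⬝ᵥ (M + Mᵀ - A) *ᵥ w)) (e : m → ℝ) :
    ((1 - M⁻¹ * A) *ᵥ e) ⬝ᵥ A *ᵥ ((1 - M⁻¹ * A) *ᵥ e)
      ≤ e ⬝ᵥ A *ᵥ e - 1 / c * ((W *ᵥ A *ᵥ e) ⬝ᵥ A *ᵥ e) := by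
  have hMw : M *ᵥ M⁻¹ *ᵥ A *ᵥ e = A *ᵥ e := by
    rw [mulVec_mulVec, mul_nonsing_inv _ hM, one_mulVec]
  have hw := hW (M⁻¹ *ᵥ A *ᵥ e)
  rw [hMw] at hw
  rw [dotProduct_mulVec_one_sub_inv_mul hA hM, one_div, sub_le_sub_iff_left, inv_mul_le_iff₀ hc]
  exact hw

end Matrix

noncomputable section

-- `system` is the 3T matrix `A` and `lower` the PCTL smoother `M`.

namespace ThreeT

variable {m : Type*} [DecidableEq m]

variable (Ar Ai Ae : Matrix m m ℝ) (dr di : m → ℝ)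

def system : Matrix ((m ⊕ m) ⊕ m) ((m ⊕ m) ⊕ m) ℝ :=
  fromBlocks (fromBlocks Ar 0 0 Ai) (fromRows (diagonal dr)ᵀ (diagonal di)ᵀ)
    (fromCols (diagonal dr) (diagonal di)) Ae

def lower : Matrix ((m ⊕ m) ⊕ m) ((m ⊕ m) ⊕ m) ℝ :=
  fromBlocks (fromBlocks Ar 0 0 Ai) 0 (fromCols (diagonal dr) (diagonal di)) Ae

def blockDiag : Matrix ((m ⊕ m) ⊕ m) ((m ⊕ m) ⊕ m) ℝ :=
  fromBlocks (fromBlocks Ar 0 0 Ai) 0 0 Ae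

variable {Ar Ai Ae dr di}

lemma posDef_blocks (h : (system Ar Ai Ae dr di).PosDef) : Ar.PosDef ∧ Ai.PosDef ∧ Ae.PosDef :=
  ⟨h.submatrix (e := Sum.inl ∘ Sum.inl) (Sum.inl_injective.comp Sum.inl_injective),
    h.submatrix (e := Sum.inl ∘ Sum.inr) (Sum.inl_injective.comp Sum.inr_injective),
    h.submatrix (e := Sum.inr) Sum.inr_injective⟩

lemma lower_add_transpose_sub_system (hr : Ar.IsSymm) (hi : Ai.IsSymm) (he : Ae.IsSymm) :
    lower Ar Ai Ae dr di + (lower Ar Ai Ae dr di)ᵀ - system Ar Ai Ae dr di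
      = blockDiag Ar Ai Ae := by
  rw [lower, system, blockDiag, fromBlocks_transpose, fromBlocks_transpose, hr.eq, hi.eq, he.eq]
  ext ((k|k)|k) ((j|j)|j) <;> simp [transpose_fromCols]

lemma abs_lower_apply_le (k j) : |lower Ar Ai Ae dr di k j| ≤ |system Ar Ai Ae dr di k j| := by
  rcases k with (k|k)|k <;> rcases j with (j|j)|j <;> simp [lower, system]

variable [Fintype m]

section
variable (Ar Ai Ae dr di)

def H₁ : Matrix ((m ⊕ m) ⊕ m) ((m ⊕ m) ⊕ m) ℝ :=
  fromBlocks (fromBlocks 1 0 0 1) (fromRows (Ar⁻¹ * (diagonal dr)ᵀ) (Ai⁻¹ * (diagonal di)ᵀ)) 0 1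

def H₂ : Matrix ((m ⊕ m) ⊕ m) ((m ⊕ m) ⊕ m) ℝ :=
  fromBlocks
    (fromBlocks ((diagonal fun k => Ar k k)⁻¹ * Ar) 0 0 ((diagonal fun k => Ai k k)⁻¹ * Ai)) 0
    (fromCols ((diagonal fun k => Ae k k)⁻¹ * diagonal dr)
      ((diagonal fun k => Ae k k)⁻¹ * diagonal di))
    ((diagonal fun k => Ae k k)⁻¹ * Ae)

end

lemma dominance_blocks (h : ∀ k, ∑ j ∈ univ.erase k, |system Ar Ai Ae dr di k j|
      ≤ system Ar Ai Ae dr di k k) :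
    (∀ i, |dr i| + ∑ j ∈ univ.erase i, |Ar i j| ≤ Ar i i) ∧
    (∀ i, |di i| + ∑ j ∈ univ.erase i, |Ai i j| ≤ Ai i i) ∧
    (∀ i, |dr i| + |di i| + ∑ j ∈ univ.erase i, |Ae i j| ≤ Ae i i) := by
  simp only [sum_erase_eq_sub (mem_univ _)] at h ⊢
  have hR := fun i => h (.inl (.inl i))
  have hI := fun i => h (.inl (.inr i))
  have hE := fun i => h (.inr i)
  simp only [system, Fintype.sum_sum_type, fromBlocks_apply₁₁, fromBlocks_apply₁₂,
    fromBlocks_apply₂₁, fromBlocks_apply₂₂, fromRows_apply_inl, fromRows_apply_inr,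
    fromCols_apply_inl, fromCols_apply_inr, diagonal_transpose, diagonal_apply, Matrix.zero_apply,
    apply_ite (abs : ℝ → ℝ), abs_zero, sum_ite_eq, sum_const_zero, mem_univ, ↓reduceIte, add_zero,
    zero_add] at hR hI hE
  exact ⟨fun i => by linarith [hR i], fun i => by linarith [hI i], fun i => by linarith [hE i]⟩

lemma isUnit_det_blockDiag (hr : IsUnit Ar.det) (hi : IsUnit Ai.det) (he : IsUnit Ae.det) :
    IsUnit (blockDiag Ar Ai Ae).det := by
  simpa [blockDiag, det_fromBlocks_zero₁₂] using (hr.mul hi).mul he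

lemma isUnit_det_lower (hr : IsUnit Ar.det) (hi : IsUnit Ai.det) (he : IsUnit Ae.det) :
    IsUnit (lower Ar Ai Ae dr di).det := by
  simpa [lower, det_fromBlocks_zero₁₂] using (hr.mul hi).mul he

lemma blockDiag_mul_H₁ (hr : Ar.IsSymm) (hi : Ai.IsSymm) (he : Ae.IsSymm)
    (hr' : IsUnit Ar.det) (hi' : IsUnit Ai.det) :
    blockDiag Ar Ai Ae * H₁ Ar Ai dr di = (lower Ar Ai Ae dr di)ᵀ := by
  simp [blockDiag, H₁, lower, fromBlocks_multiply, fromBlocks_transpose, fromBlocks_mul_fromRows,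
    ← Matrix.mul_assoc, mul_nonsing_inv _ hr', mul_nonsing_inv _ hi', transpose_fromCols,
    hr.eq, hi.eq, he.eq]

lemma diagonal_inv_mul_lower (hpos : ∀ k, 0 < system Ar Ai Ae dr di k k) :
    (diagonal fun k => system Ar Ai Ae dr di k k)⁻¹ * lower Ar Ai Ae dr di = H₂ Ar Ai Ae dr di := by
  rw [inv_diagonal_of_ne_zero fun k => (hpos k).ne', H₂,
    inv_diagonal_of_ne_zero (v := fun i => Ar i i) fun i => (hpos (.inl (.inl i))).ne',
    inv_diagonal_of_ne_zero (v := fun i => Ai i i) fun i => (hpos (.inl (.inr i))).ne',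
    inv_diagonal_of_ne_zero (v := fun i => Ae i i) fun i => (hpos (.inr i)).ne']
  ext ((i|i)|i) ((j|j)|j) <;> simp [diagonal_mul, diagonal_apply, mul_ite, lower, system]

lemma inv_mul_eq_H₁_mul_H₂ (hr : Ar.PosDef) (hi : Ai.PosDef) (he : Ae.PosDef)
    (hpos : ∀ k, 0 < system Ar Ai Ae dr di k k) :
    (lower Ar Ai Ae dr di + (lower Ar Ai Ae dr di)ᵀ - system Ar Ai Ae dr di)⁻¹ *
        ((lower Ar Ai Ae dr di)ᵀ * (diagonal fun k => system Ar Ai Ae dr di k k)⁻¹ *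
          lower Ar Ai Ae dr di)
      = H₁ Ar Ai dr di * H₂ Ar Ai Ae dr di := by
  rw [lower_add_transpose_sub_system hr.isHermitian.isSymm hi.isHermitian.isSymm
      he.isHermitian.isSymm, Matrix.mul_assoc, diagonal_inv_mul_lower hpos,
    ← blockDiag_mul_H₁ hr.isHermitian.isSymm hi.isHermitian.isSymm he.isHermitian.isSymm
      hr.isUnit_det hi.isUnit_det, Matrix.mul_assoc, ← Matrix.mul_assoc _ (blockDiag Ar Ai Ae),
    nonsing_inv_mul _ (isUnit_det_blockDiag hr.isUnit_det hi.isUnit_det he.isUnit_det),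
    Matrix.one_mul]

lemma sum_abs_H₁_le_two (hr : IsUnit Ar.det) (hi : IsUnit Ai.det) (hr' : ∀ k j, 0 ≤ Ar⁻¹ k j)
    (hi' : ∀ k j, 0 ≤ Ai⁻¹ k j) (hdr : ∀ i, |dr i| ≤ ∑ j, Ar i j)
    (hdi : ∀ i, |di i| ≤ ∑ j, Ai i j) (k) : ∑ j, |H₁ Ar Ai dr di k j| ≤ 2 := by
  rcases k with (i|i)|i <;>
    simp only [H₁, diagonal_transpose, Fintype.sum_sum_type, fromBlocks_apply₁₁, fromBlocks_apply₁₂,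
      fromBlocks_apply₂₁, fromBlocks_apply₂₂, fromRows_apply_inl, fromRows_apply_inr, one_apply,
      Matrix.zero_apply, apply_ite (abs : ℝ → ℝ), abs_one, abs_zero, sum_ite_eq, sum_const_zero,
      mem_univ, ↓reduceIte, add_zero, zero_add]
  · linarith [sum_abs_inv_mul_diagonal_le_one hr hr' hdr i]
  · linarith [sum_abs_inv_mul_diagonal_le_one hi hi' hdi i]
  · norm_num

lemma sum_coupling_sq_div_le (hr : Ar.IsSymm) (hi : Ai.IsSymm) (he : Ae.PosSemidef)
    (hpos : ∀ i, 0 < Ae i i) (hdr : ∀ i, |dr i| + ∑ j ∈ univ.erase i, |Ar i j| ≤ Ar i i)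
    (hdi : ∀ i, |di i| + ∑ j ∈ univ.erase i, |Ai i j| ≤ Ai i i)
    (hde : ∀ i, |dr i| + |di i| + ∑ j ∈ univ.erase i, |Ae i j| ≤ Ae i i) (x y z : m → ℝ) :
    ∑ i, (dr i * x i + di i * y i + (Ae *ᵥ z) i) ^ 2 / Ae i i
      ≤ 2 * (x ⬝ᵥ Ar *ᵥ x + y ⬝ᵥ Ai *ᵥ y) + 4 * (z ⬝ᵥ Ae *ᵥ z) := by
  have hoff : ∀ i, 0 ≤ ∑ j ∈ univ.erase i, |Ae i j| := fun i => sum_nonneg fun j _ => abs_nonneg _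
  calc ∑ i, (dr i * x i + di i * y i + (Ae *ᵥ z) i) ^ 2 / Ae i i
      ≤ ∑ i, (2 * (|dr i| * x i ^ 2 + |di i| * y i ^ 2) + 2 * ((Ae *ᵥ z) i ^ 2 / Ae i i)) :=
        sum_le_sum fun i _ => add_sq_div_le_of_abs_add_abs_le (hpos i) (by linarith [hde i, hoff i])
    _ = 2 * (∑ i, |dr i| * x i ^ 2 + ∑ i, |di i| * y i ^ 2)
          + 2 * ∑ i, (Ae *ᵥ z) i ^ 2 / Ae i i := by
        simp only [← mul_sum, sum_add_distrib]
    _ ≤ _ := by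
        have hdome : ∀ i, ∑ j ∈ univ.erase i, |Ae i j| ≤ Ae i i := fun i => by
          linarith [hde i, abs_nonneg (dr i), abs_nonneg (di i)]
        linarith [he.sum_sq_mulVec_div_diag_le hdome z,
          hr.sum_abs_mul_sq_le_dotProduct_mulVec_self hdr x,
          hi.sum_abs_mul_sq_le_dotProduct_mulVec_self hdi y]

lemma dotProduct_inv_diagonal_lower_le_four_mul_blockDiag
    (hpos : ∀ k, 0 < system Ar Ai Ae dr di k k)
    (hr : Ar.PosSemidef) (hi : Ai.PosSemidef) (he : Ae.PosSemidef)
    (hdr : ∀ i, |dr i| + ∑ j ∈ univ.erase i, |Ar i j| ≤ Ar i i)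
    (hdi : ∀ i, |di i| + ∑ j ∈ univ.erase i, |Ai i j| ≤ Ai i i)
    (hde : ∀ i, |dr i| + |di i| + ∑ j ∈ univ.erase i, |Ae i j| ≤ Ae i i) (w : (m ⊕ m) ⊕ m → ℝ) :
    ((diagonal fun k => system Ar Ai Ae dr di k k)⁻¹ *ᵥ lower Ar Ai Ae dr di *ᵥ w)
        ⬝ᵥ lower Ar Ai Ae dr di *ᵥ w ≤ 4 * (w ⬝ᵥ blockDiag Ar Ai Ae *ᵥ w) := by
  obtain ⟨x, y, z, rfl⟩ : ∃ x y z, w = Sum.elim (Sum.elim x y) z :=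
    ⟨_, _, _, by ext ((i|i)|i) <;> rfl⟩
  rw [inv_diagonal_mulVec_dotProduct_self fun k => (hpos k).ne']
  simp only [lower, blockDiag, system, fromBlocks_mulVec, fromCols_mulVec, Fintype.sum_sum_type,
    Sum.elim_comp_inl, Sum.elim_comp_inr, Sum.elim_inl, Sum.elim_inr, zero_mulVec, add_zero,
    zero_add, fromBlocks_apply₁₁, fromBlocks_apply₂₂, Pi.add_apply, mulVec_diagonal,
    sumElim_dotProduct_sumElim]
  have hr' := hr.sum_sq_mulVec_div_diag_le (fun i => by linarith [hdr i, abs_nonneg (dr i)]) x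
  have hi' := hi.sum_sq_mulVec_div_diag_le (fun i => by linarith [hdi i, abs_nonneg (di i)]) y
  have he' := sum_coupling_sq_div_le hr.isHermitian.isSymm hi.isHermitian.isSymm he
    (fun i => hpos (.inr i)) hdr hdi hde x y z
  linarith

end ThreeT

end

theorem pctl_smoothing_bound_general {n : ℕ}
    (Ar Ai Ae : Matrix (Fin n) (Fin n) ℝ) (dr di : Fin n → ℝ)
    (hArM : (∀ k, 0 < Ar k k) ∧ (∀ k j, k ≠ j → Ar k j ≤ 0) ∧ ∀ k j, 0 ≤ Ar⁻¹ k j)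
    (hAiM : (∀ k, 0 < Ai k k) ∧ (∀ k j, k ≠ j → Ai k j ≤ 0) ∧ ∀ k j, 0 ≤ Ai⁻¹ k j)
    (A M D H₁ H₂ : Matrix ((Fin n ⊕ Fin n) ⊕ Fin n) ((Fin n ⊕ Fin n) ⊕ Fin n) ℝ)
    (hAdef : A = Matrix.fromBlocks (Matrix.fromBlocks Ar 0 0 Ai)
      (Matrix.fromRows (Matrix.diagonal dr)ᵀ (Matrix.diagonal di)ᵀ)
      (Matrix.fromCols (Matrix.diagonal dr) (Matrix.diagonal di)) Ae)
    (hApd : A.PosDef)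
    (hdd : ∀ k, ∑ j ∈ Finset.univ \ {k}, |A k j| < A k k)
    (hMdef : M = Matrix.fromBlocks (Matrix.fromBlocks Ar 0 0 Ai) 0
      (Matrix.fromCols (Matrix.diagonal dr) (Matrix.diagonal di)) Ae)
    (hDdef : D = Matrix.diagonal fun k => A k k)
    (hH₁ : H₁ = Matrix.fromBlocks (Matrix.fromBlocks 1 0 0 1)
      (Matrix.fromRows (Ar⁻¹ * (Matrix.diagonal dr)ᵀ) (Ai⁻¹ * (Matrix.diagonal di)ᵀ)) 0 1)
    (hH₂ : H₂ = Matrix.fromBlocks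
      (Matrix.fromBlocks ((Matrix.diagonal fun k => Ar k k)⁻¹ * Ar) 0 0
        ((Matrix.diagonal fun k => Ai k k)⁻¹ * Ai)) 0
      (Matrix.fromCols ((Matrix.diagonal fun k => Ae k k)⁻¹ * Matrix.diagonal dr)
        ((Matrix.diagonal fun k => Ae k k)⁻¹ * Matrix.diagonal di))
      ((Matrix.diagonal fun k => Ae k k)⁻¹ * Ae)) :
    (M + Mᵀ - A)⁻¹ * (Mᵀ * D⁻¹ * M) = H₁ * H₂ ∧
    (∀ μ ∈ spectrum ℝ ((M + Mᵀ - A)⁻¹ * (Mᵀ * D⁻¹ * M)),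
        μ ≤ (⨆ k, ∑ j, |H₁ k j|) * (⨆ k, ∑ j, |H₂ k j|)) ∧
    (⨆ k, ∑ j, |H₁ k j|) * (⨆ k, ∑ j, |H₂ k j|) ≤ 4 ∧
    (∀ e : (Fin n ⊕ Fin n) ⊕ Fin n → ℝ,
        ((1 - M⁻¹ * A).mulVec e) ⬝ᵥ A.mulVec ((1 - M⁻¹ * A).mulVec e) ≤
          e ⬝ᵥ A.mulVec e - (1 / 4) * ((D⁻¹.mulVec (A.mulVec e)) ⬝ᵥ A.mulVec e)) := by
  obtain rfl : A = ThreeT.system Ar Ai Ae dr di := hAdef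
  obtain rfl : M = ThreeT.lower Ar Ai Ae dr di := hMdef
  obtain rfl : H₁ = ThreeT.H₁ Ar Ai dr di := hH₁
  obtain rfl : H₂ = ThreeT.H₂ Ar Ai Ae dr di := hH₂
  subst hDdef
  obtain ⟨hr, hi, he⟩ := ThreeT.posDef_blocks hApd
  have hpos : ∀ k, 0 < ThreeT.system Ar Ai Ae dr di k k := fun k => hApd.diag_pos
  have hdom : ∀ k, ∑ j ∈ univ.erase k, |ThreeT.system Ar Ai Ae dr di k j|
      ≤ ThreeT.system Ar Ai Ae dr di k k := fun k => by
    simpa only [sdiff_singleton_eq_erase] using (hdd k).le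
  obtain ⟨hdr, hdi, hde⟩ := ThreeT.dominance_blocks hdom
  have hfac := ThreeT.inv_mul_eq_H₁_mul_H₂ hr hi he hpos
  have hH₁ : ⨆ k, ∑ j, |ThreeT.H₁ Ar Ai dr di k j| ≤ 2 :=
    Real.iSup_le (ThreeT.sum_abs_H₁_le_two hr.isUnit_det hi.isUnit_det hArM.2.2 hAiM.2.2
      (abs_le_sum_row_of_offDiag_nonpos hArM.2.1 hdr)
      (abs_le_sum_row_of_offDiag_nonpos hAiM.2.1 hdi)) zero_le_two
  have hH₂ : ⨆ k, ∑ j, |ThreeT.H₂ Ar Ai Ae dr di k j| ≤ 2 :=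
    Real.iSup_le (fun k => ThreeT.diagonal_inv_mul_lower hpos ▸
      sum_abs_diagonal_inv_mul_le_two hpos hdom ThreeT.abs_lower_apply_le k) zero_le_two
  refine ⟨hfac, fun μ hμ => le_iSup_sum_abs_mul_of_mem_spectrum_mul _ _ (hfac ▸ hμ),
    (mul_le_mul hH₁ hH₂ (Real.iSup_nonneg fun k => sum_nonneg fun j _ => abs_nonneg _)
      zero_le_two).trans (by norm_num), ?_⟩
  refine dotProduct_mulVec_one_sub_inv_mul_le hApd.isHermitian.isSymm
    (ThreeT.isUnit_det_lower hr.isUnit_det hi.isUnit_det he.isUnit_det) four_pos fun w => ?_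
  rw [ThreeT.lower_add_transpose_sub_system hr.isHermitian.isSymm hi.isHermitian.isSymm
    he.isHermitian.isSymm]
  exact ThreeT.dotProduct_inv_diagonal_lower_le_four_mul_blockDiag hpos hr.posSemidef
    hi.posSemidef he.posSemidef hdr hdi hde w

/-- for the PCTL smoother of the 3T system,
`H := (M + Mᵀ − A)⁻¹ MᵀD⁻¹M` factors as `H = H₁H₂` and
`λ_max(H) ≤ ‖H₁‖_∞ ‖H₂‖_∞ ≤ 4`; consequently `G₂ = I − M⁻¹A` satisfies
`‖G₂e‖_A² ≤ ‖e‖_A² − (1/4)(D⁻¹Ae, Ae)` for all `e`. -/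
theorem pctl_smoothing_bound {n : ℕ}
    (Ar Ai Ae : Matrix (Fin n) (Fin n) ℝ) (dr di : Fin n → ℝ)
    (hArM : (∀ k, 0 < Ar k k) ∧ (∀ k j, k ≠ j → Ar k j ≤ 0) ∧ ∀ k j, 0 ≤ Ar⁻¹ k j)
    (hAiM : (∀ k, 0 < Ai k k) ∧ (∀ k j, k ≠ j → Ai k j ≤ 0) ∧ ∀ k j, 0 ≤ Ai⁻¹ k j)
    (hAeM : (∀ k, 0 < Ae k k) ∧ (∀ k j, k ≠ j → Ae k j ≤ 0) ∧ ∀ k j, 0 ≤ Ae⁻¹ k j)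
    (hdr : ∀ k, dr k < 0) (hdi : ∀ k, di k < 0)
    (A M D H₁ H₂ : Matrix ((Fin n ⊕ Fin n) ⊕ Fin n) ((Fin n ⊕ Fin n) ⊕ Fin n) ℝ)
    (hAdef : A = Matrix.fromBlocks (Matrix.fromBlocks Ar 0 0 Ai)
      (Matrix.fromRows (Matrix.diagonal dr)ᵀ (Matrix.diagonal di)ᵀ)
      (Matrix.fromCols (Matrix.diagonal dr) (Matrix.diagonal di)) Ae)
    (hApd : A.PosDef)
    (hdd : ∀ k, ∑ j ∈ Finset.univ \ {k}, |A k j| < A k k)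
    (hMdef : M = Matrix.fromBlocks (Matrix.fromBlocks Ar 0 0 Ai) 0
      (Matrix.fromCols (Matrix.diagonal dr) (Matrix.diagonal di)) Ae)
    (hDdef : D = Matrix.diagonal fun k => A k k)
    (hH₁ : H₁ = Matrix.fromBlocks (Matrix.fromBlocks 1 0 0 1)
      (Matrix.fromRows (Ar⁻¹ * (Matrix.diagonal dr)ᵀ) (Ai⁻¹ * (Matrix.diagonal di)ᵀ)) 0 1)
    (hH₂ : H₂ = Matrix.fromBlocks
      (Matrix.fromBlocks ((Matrix.diagonal fun k => Ar k k)⁻¹ * Ar) 0 0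
        ((Matrix.diagonal fun k => Ai k k)⁻¹ * Ai)) 0
      (Matrix.fromCols ((Matrix.diagonal fun k => Ae k k)⁻¹ * Matrix.diagonal dr)
        ((Matrix.diagonal fun k => Ae k k)⁻¹ * Matrix.diagonal di))
      ((Matrix.diagonal fun k => Ae k k)⁻¹ * Ae)) :
    (M + Mᵀ - A)⁻¹ * (Mᵀ * D⁻¹ * M) = H₁ * H₂ ∧
    (∀ μ ∈ spectrum ℝ ((M + Mᵀ - A)⁻¹ * (Mᵀ * D⁻¹ * M)),
        μ ≤ (⨆ k, ∑ j, |H₁ k j|) * (⨆ k, ∑ j, |H₂ k j|)) ∧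
    (⨆ k, ∑ j, |H₁ k j|) * (⨆ k, ∑ j, |H₂ k j|) ≤ 4 ∧
    (∀ e : (Fin n ⊕ Fin n) ⊕ Fin n → ℝ,
        ((1 - M⁻¹ * A).mulVec e) ⬝ᵥ A.mulVec ((1 - M⁻¹ * A).mulVec e) ≤
          e ⬝ᵥ A.mulVec e - (1 / 4) * ((D⁻¹.mulVec (A.mulVec e)) ⬝ᵥ A.mulVec e)) :=
  pctl_smoothing_bound_general Ar Ai Ae dr di hArM hAiM A M D H₁ H₂ hAdef hApd hdd hMdef hDdef hH₁
    hH₂
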